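/- Let G be a K_r-free graph. If x_1, ..., x_{m-1} form a clique in G and their common neighborhood has size D > R(r−m+1, s), then the common neighborhood contains at least (D / (2(r+s)^s))^s independent sets of size s. -/

import Mathlib

/-! Since `S` is an `(m-1)`-clique and `G` is `K_r`-free, the common neighbourhood `D` of `S`
has no `(r-m+1)`-clique, so by the definition of `R = R(r-m+1, s)` every `R`-subset of `D`
contains an independent `s`-set. Double counting pairs (independent `s`-set, `R`-set containing
it) gives `C(|D|, s) ≤ N · C(R, s)` for the number `N` of independent `s`-sets, and
`C(|D|, s) / C(R, s) ≥ (|D| / R)^s`. Ramsey's bound `R < C(r-m+1+s, s) ≤ (r+s)^s` finishes. -/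

open SimpleGraph Finset

/-- The Ramsey number `R(a,b)`: the least `n` such that every graph on `n` vertices
contains an `a`-clique or an independent set of size `b`. -/
noncomputable def ramsey (a b : ℕ) : ℕ :=
  sInf {n | ∀ G : SimpleGraph (Fin n),
    (∃ S : Finset (Fin n), G.IsNClique a S) ∨ (∃ S : Finset (Fin n), Gᶜ.IsNClique b S)}

theorem Nat.pow_mul_descFactorial_le {R N : ℕ} (h : R ≤ N) :
    ∀ k, N ^ k * R.descFactorial k ≤ R ^ k * N.descFactorial k
  | 0 => by simp
  | k + 1 => by
    have hstep : N * (R - k) ≤ R * (N - k) := by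
      rw [Nat.mul_sub, Nat.mul_sub, mul_comm N R]
      exact Nat.sub_le_sub_left (Nat.mul_le_mul_right k h) _
    calc N ^ (k + 1) * R.descFactorial (k + 1)
        = N * (R - k) * (N ^ k * R.descFactorial k) := by
          rw [pow_succ, Nat.descFactorial_succ]; ring
      _ ≤ R * (N - k) * (R ^ k * N.descFactorial k) :=
          Nat.mul_le_mul hstep (Nat.pow_mul_descFactorial_le h k)
      _ = R ^ (k + 1) * N.descFactorial (k + 1) := by
          rw [pow_succ, Nat.descFactorial_succ]; ring

theorem Nat.pow_mul_choose_le {R N : ℕ} (h : R ≤ N) (k : ℕ) :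
    N ^ k * R.choose k ≤ R ^ k * N.choose k := by
  have := Nat.pow_mul_descFactorial_le h k
  rw [Nat.descFactorial_eq_factorial_mul_choose, Nat.descFactorial_eq_factorial_mul_choose,
    mul_left_comm, mul_left_comm (R ^ k)] at this
  exact Nat.le_of_mul_le_mul_left this k.factorial_pos

namespace Finset

variable {α : Type*} [DecidableEq α] {D : Finset α} {𝒜 : Finset (Finset α)} {s R : ℕ}

theorem choose_le_card_mul_choose (h𝒜 : 𝒜 ⊆ D.powersetCard s)
    (hcover : ∀ T ∈ D.powersetCard R, ∃ I ∈ 𝒜, I ⊆ T) (hsR : s ≤ R) (hRD : R ≤ #D) :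
    (#D).choose s ≤ #𝒜 * R.choose s := by
  have hcount : (#D).choose R * 1 ≤ #𝒜 * (#D - s).choose (R - s) := by
    rw [← card_powersetCard]
    refine card_mul_le_card_mul (fun T I => I ⊆ T) (fun T hT => ?_) (fun I hI => ?_)
    · obtain ⟨I, hI, hIT⟩ := hcover T hT
      exact card_pos.2 ⟨I, mem_filter.2 ⟨hI, hIT⟩⟩
    · obtain ⟨hID, hIs⟩ := mem_powersetCard.1 (h𝒜 hI)
      rw [bipartiteBelow, card_filter_powersetCard_subset _ _ _ hID (hIs ▸ hsR), hIs]
  have hpos : 0 < (#D - s).choose (R - s) := Nat.choose_pos (by omega)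
  refine Nat.le_of_mul_le_mul_right ?_ hpos
  calc (#D).choose s * (#D - s).choose (R - s) = (#D).choose R * R.choose s :=
        (Nat.choose_mul hsR).symm
    _ ≤ #𝒜 * (#D - s).choose (R - s) * R.choose s := by
        rw [mul_one] at hcount; gcongr
    _ = #𝒜 * R.choose s * (#D - s).choose (R - s) := by ring

theorem pow_card_le_pow_mul_card (h𝒜 : 𝒜 ⊆ D.powersetCard s)
    (hcover : ∀ T ∈ D.powersetCard R, ∃ I ∈ 𝒜, I ⊆ T) (hRD : R ≤ #D) :
    #D ^ s ≤ R ^ s * #𝒜 := by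
  obtain ⟨T, hTD, hTR⟩ := exists_subset_card_eq hRD
  obtain ⟨I, hI, hIT⟩ := hcover T (mem_powersetCard.2 ⟨hTD, hTR⟩)
  have hsR : s ≤ R := (mem_powersetCard.1 (h𝒜 hI)).2 ▸ hTR ▸ card_le_card hIT
  refine Nat.le_of_mul_le_mul_right ?_ (Nat.choose_pos hsR)
  calc #D ^ s * R.choose s ≤ R ^ s * (#D).choose s := Nat.pow_mul_choose_le hRD s
    _ ≤ R ^ s * (#𝒜 * R.choose s) := by
        gcongr; exact choose_le_card_mul_choose h𝒜 hcover hsR hRD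
    _ = R ^ s * #𝒜 * R.choose s := by ring

end Finset

namespace SimpleGraph

variable {V : Type*} (G : SimpleGraph V)

theorem exists_isNClique_or_isNIndepSet_of_choose_le (a b : ℕ) {T : Finset V}
    (hT : (a + b).choose a ≤ #T + 1) :
    (∃ C ⊆ T, G.IsNClique a C) ∨ ∃ C ⊆ T, G.IsNIndepSet b C := by
  classical
  induction a generalizing b T with
  | zero => exact Or.inl ⟨∅, empty_subset _, by simp⟩
  | succ a iha =>
    induction b generalizing T with
    | zero => exact Or.inr ⟨∅, empty_subset _, by simp [← isNClique_compl]⟩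
    | succ b ihb =>
      have hpascal : (a + 1 + (b + 1)).choose (a + 1) =
          (a + (b + 1)).choose a + (a + 1 + b).choose (a + 1) := by
        rw [show a + 1 + (b + 1) = a + b + 1 + 1 by ring, Nat.choose_succ_succ',
          show a + (b + 1) = a + b + 1 by ring, show a + 1 + b = a + b + 1 by ring]
      have h₁ := Nat.choose_pos (show a ≤ a + (b + 1) by omega)
      have h₂ := Nat.choose_pos (show a + 1 ≤ a + 1 + b by omega)
      obtain ⟨v, hv⟩ : T.Nonempty := card_pos.1 (by omega)
      set N := (T.erase v).filter (G.Adj v)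
      set M := (T.erase v).filter (¬G.Adj v ·)
      have hNM : #N + #M + 1 = #T := by
        rw [card_filter_add_card_filter_not, card_erase_add_one hv]
      have hNT : N ⊆ T := (filter_subset _ _).trans (erase_subset _ _)
      have hMT : M ⊆ T := (filter_subset _ _).trans (erase_subset _ _)
      by_cases hN : (a + (b + 1)).choose a ≤ #N + 1
      · obtain ⟨C, hCN, hC⟩ | ⟨C, hCN, hC⟩ := iha (b + 1) hN
        · refine Or.inl ⟨insert v C, insert_subset hv (hCN.trans hNT), hC.insert ?_⟩
          exact fun c hc => (mem_filter.1 (hCN hc)).2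
        · exact Or.inr ⟨C, hCN.trans hNT, hC⟩
      · obtain ⟨C, hCM, hC⟩ | ⟨C, hCM, hC⟩ := ihb (T := M) (by omega)
        · exact Or.inl ⟨C, hCM.trans hMT, hC⟩
        · refine Or.inr ⟨insert v C, insert_subset hv (hCM.trans hMT), ?_⟩
          rw [← isNClique_compl] at hC ⊢
          refine hC.insert fun c hc => ?_
          obtain ⟨hcT, hvc⟩ := mem_filter.1 (hCM hc)
          exact ⟨(ne_of_mem_erase hcT).symm, hvc⟩

variable {G}

theorem IsNClique.map_of_comap {W : Type*} {f : W ↪ V} {n : ℕ} {C : Finset W}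
    (h : (G.comap f).IsNClique n C) : G.IsNClique n (C.map f) :=
  h.map.mono (map_comap_le f G)

theorem compl_comap {W : Type*} (f : W ↪ V) : (G.comap f)ᶜ = Gᶜ.comap f := by
  ext x y
  simp [f.injective.ne_iff]

theorem CliqueFree.cliqueFreeOn_commonNeighbors {k a : ℕ} {S : Finset V}
    (hG : G.CliqueFree (k + a)) (hS : G.IsNClique k S) :
    G.CliqueFreeOn {v | ∀ x ∈ S, G.Adj x v} a := by
  classical
  intro C hC hCa
  have hdisj : Disjoint S C :=
    Finset.disjoint_left.2 fun x hxS hxC => G.irrefl (hC (mem_coe.2 hxC) x hxS)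
  refine hG (S ∪ C) ⟨?_, by rw [card_union_of_disjoint hdisj, hS.card_eq, hCa.card_eq]⟩
  have := G.symm
  rw [coe_union, IsClique, Set.pairwise_union_of_symm]
  exact ⟨hS.isClique, hCa.isClique, fun x hx y hy _ => hC hy x hx⟩

theorem IsIndepSet.not_adj {s : Set V} (h : G.IsIndepSet s) {x y : V} (hx : x ∈ s)
    (hy : y ∈ s) : ¬G.Adj x y := fun hxy => h hx hy (G.ne_of_adj hxy) hxy

end SimpleGraph

theorem ramsey_property_of_choose_le {a b n : ℕ} (h : (a + b).choose a ≤ n + 1)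
    (G : SimpleGraph (Fin n)) :
    (∃ S : Finset (Fin n), G.IsNClique a S) ∨ (∃ S : Finset (Fin n), Gᶜ.IsNClique b S) := by
  simp only [isNClique_compl]
  obtain ⟨C, -, hC⟩ | ⟨C, -, hC⟩ :=
    G.exists_isNClique_or_isNIndepSet_of_choose_le a b (T := univ) (by simpa using h)
  exacts [Or.inl ⟨C, hC⟩, Or.inr ⟨C, hC⟩]

theorem ramsey_le_pow (a b : ℕ) : ramsey a b ≤ (a + b) ^ b :=
  calc ramsey a b ≤ (a + b).choose a - 1 :=
        Nat.sInf_le fun _ => ramsey_property_of_choose_le (by omega) _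
    _ ≤ (a + b) ^ b := by
        rw [Nat.choose_symm_add]
        exact (Nat.sub_le _ _).trans (Nat.choose_le_pow _ _)

theorem ramsey_property (a b : ℕ) (G : SimpleGraph (Fin (ramsey a b))) :
    (∃ S, G.IsNClique a S) ∨ ∃ S, G.IsNIndepSet b S := by
  obtain h | ⟨S, hS⟩ := Nat.sInf_mem (⟨_, ramsey_property_of_choose_le (Nat.le_succ _)⟩ :
    ∃ n, ∀ G : SimpleGraph (Fin n), (∃ S, G.IsNClique a S) ∨ ∃ S, Gᶜ.IsNClique b S) G
  exacts [Or.inl h, Or.inr ⟨S, (isNClique_compl _).1 hS⟩]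

theorem SimpleGraph.exists_isNClique_or_isNIndepSet_of_card_eq_ramsey {V : Type*}
    (G : SimpleGraph V) {a b : ℕ} {T : Finset V} (hT : #T = ramsey a b) :
    (∃ C ⊆ T, G.IsNClique a C) ∨ ∃ C ⊆ T, G.IsNIndepSet b C := by
  let e := (T.equivFinOfCardEq hT).symm
  let f : Fin (ramsey a b) ↪ V := ⟨fun i => e i, fun i j h => e.injective (Subtype.ext h)⟩
  have hfT (C : Finset (Fin (ramsey a b))) : C.map f ⊆ T := by
    intro x hx
    obtain ⟨i, -, rfl⟩ := mem_map.1 hx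
    exact (e i).2
  obtain ⟨C, hC⟩ | ⟨C, hC⟩ := ramsey_property a b (G.comap f)
  · exact Or.inl ⟨C.map f, hfT C, hC.map_of_comap⟩
  · rw [← isNClique_compl, compl_comap] at hC
    exact Or.inr ⟨C.map f, hfT C, (isNClique_compl _).1 hC.map_of_comap⟩

theorem stmt10_general (r s m : ℕ) (hr : 0 < r) (hm : 0 < m)
    {n : ℕ} (G : SimpleGraph (Fin n)) [DecidableRel G.Adj]
    (hKr : G.CliqueFree r)
    (S : Finset (Fin n)) (hS : G.IsNClique (m - 1) S)
    (D : Finset (Fin n)) (hD : D = univ.filter fun v => ∀ x ∈ S, G.Adj x v)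
    (hDbig : ramsey (r - m + 1) s < D.card) :
    ((D.card : ℝ) / (2 * (r + s : ℝ) ^ s)) ^ s ≤
      (((D.powersetCard s).filter
        fun T => ∀ x ∈ T, ∀ y ∈ T, ¬ G.Adj x y).card : ℝ) := by
  set 𝒩 := (D.powersetCard s).filter fun T => ∀ x ∈ T, ∀ y ∈ T, ¬ G.Adj x y
  have hfree : G.CliqueFreeOn D (r - m + 1) :=
    CliqueFreeOn.subset G (by simp [hD])
      ((hKr.mono (show r ≤ m - 1 + (r - m + 1) by omega)).cliqueFreeOn_commonNeighbors hS)
  have hcover : ∀ T ∈ D.powersetCard (ramsey (r - m + 1) s), ∃ I ∈ 𝒩, I ⊆ T := by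
    intro T hT
    obtain ⟨hTD, hTcard⟩ := mem_powersetCard.1 hT
    obtain ⟨C, hCT, hC⟩ | ⟨I, hIT, hI⟩ :=
      G.exists_isNClique_or_isNIndepSet_of_card_eq_ramsey hTcard
    · exact (hfree (coe_subset.2 (hCT.trans hTD)) hC).elim
    · refine ⟨I, mem_filter.2 ⟨mem_powersetCard.2 ⟨hIT.trans hTD, hI.card_eq⟩, ?_⟩, hIT⟩
      exact fun x hx y hy => hI.isIndepSet.not_adj hx hy
  have hramsey : ramsey (r - m + 1) s ≤ (r + s) ^ s :=
    (ramsey_le_pow _ _).trans (Nat.pow_le_pow_left (by omega) s)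
  have hcount : #D ^ s ≤ ((r + s) ^ s) ^ s * #𝒩 :=
    (pow_card_le_pow_mul_card (filter_subset _ _) hcover hDbig.le).trans (by gcongr)
  rw [div_pow, div_le_iff₀ (by positivity)]
  calc (#D : ℝ) ^ s ≤ ((r + s : ℝ) ^ s) ^ s * #𝒩 := by exact_mod_cast hcount
    _ ≤ #𝒩 * (2 * (r + s : ℝ) ^ s) ^ s := by
        rw [mul_comm]; gcongr; linarith [pow_nonneg (by positivity : (0 : ℝ) ≤ r + s) s]

/-- **Lemma.** Let `G` be `K_r`-free. If `x_1,…,x_{m-1}` form a clique whose common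
neighborhood has size `D > R(r−m+1, s)`, then that common neighborhood contains at least
`(D/(2(r+s)^s))^s` independent sets of size `s`. -/
theorem stmt10 (r s m : ℕ) (hr : 0 < r) (hs : 0 < s) (hm : 0 < m)
    {n : ℕ} (G : SimpleGraph (Fin n)) [DecidableRel G.Adj]
    (hKr : G.CliqueFree r)
    (S : Finset (Fin n)) (hS : G.IsNClique (m - 1) S)
    (D : Finset (Fin n)) (hD : D = univ.filter fun v => ∀ x ∈ S, G.Adj x v)
    (hDbig : ramsey (r - m + 1) s < D.card) :
    ((D.card : ℝ) / (2 * (r + s : ℝ) ^ s)) ^ s ≤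
      (((D.powersetCard s).filter
        fun T => ∀ x ∈ T, ∀ y ∈ T, ¬ G.Adj x y).card : ℝ) :=
  stmt10_general r s m hr hm G hKr S hS D hD hDbig
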